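/- (Value function of k-th iterate) With the iteration of policy improvement as above, the value function after k iterations satisfies J^{π^k}(t,x;w) = A^{T-t-k}(σ²r_f²/(a²+σ²))^k (x-ρ_t w)² + (λ/2)k ln((a²+σ²)/(πλ)) + (λ/2)Σ_{i=0}^{k-1} i·ln(σ²r_f²/(a²+σ²)) + (λ ln A/2) k(T-t-k) + f(t+k), for 0 ≤ k ≤ T-t. -/

import Mathlib

open MeasureTheory Real

/-- Gaussian density with mean `m` and variance `s2`. -/
noncomputable def gaussPdf (m s2 u : ℝ) : ℝ :=
  (Real.sqrt (2 * Real.pi * s2))⁻¹ * Real.exp (-(u - m) ^ 2 / (2 * s2))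

/-- A probability density on ℝ with finite relevant integrals. -/
def IsAdmissibleDensity (p : ℝ → ℝ) : Prop :=
  (∀ u, 0 ≤ p u) ∧ (∫ u, p u) = 1 ∧
    Integrable (fun u => u ^ 2 * p u) ∧
    Integrable (fun u => p u * Real.log (p u))

/-- `E[Jnext(r_f x + r U)] + λ ∫ p ln p`, with `U ~ p` independent of `r`. -/
noncomputable def stepVal {Ω : Type*} [MeasurableSpace Ω] (μ : Measure Ω)
    (r : Ω → ℝ) (rf lam : ℝ) (Jnext : ℝ → ℝ) (x : ℝ) (p : ℝ → ℝ) : ℝ :=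
  (∫ ω, ∫ u, Jnext (rf * x + r ω * u) * p u ∂volume ∂μ) +
    lam * ∫ u, p u * Real.log (p u)

/-- The function `f` of the paper's Theorem 2. -/
noncomputable def fPaper (lam B C A a σ w b : ℝ) (T s : ℕ) : ℝ :=
  lam * B * (a ^ 2 + σ ^ 2) * (1 - (C * A) ^ (T - s)) / (1 - C * A) -
    lam / 2 * Real.log (2 * Real.pi * lam * B) * ((T : ℝ) - s) -
    lam / 2 * ((T : ℝ) - s) -
    lam / 2 * Real.log C * (∑ i ∈ Finset.range (T - s), (i : ℝ)) - (w - b) ^ 2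


/-!
Induction on `k`. If `J^k(t+1, ·) = α (y - ρ)² + c`, then averaging over the return `r` and
completing the square in the action `u` writes the one-step functional as
`β E_p[(U - m)²] + λ ∫ p ln p` plus a term free of `p`, with `β = α (a² + σ²)`.
By Gibbs' inequality this is minimised by the Gaussian of variance `λ / (2β)`, with minimum
`(λ/2) ln (β / (πλ))`, so the improved policy gives
`J^{k+1}(t, x) = α σ² / (a² + σ²) · (r_f x - ρ)² + c + (λ/2) ln (β / (πλ))`,
which is the closed form at `k + 1`.
-/

open ProbabilityTheory NNReal

section Gaussian

variable {m s2 : ℝ}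

lemma gaussPdf_eq_gaussianPDFReal (hs2 : 0 ≤ s2) :
    gaussPdf m s2 = gaussianPDFReal m s2.toNNReal := by
  ext u
  simp [gaussPdf, gaussianPDFReal, hs2]

variable (hs2 : 0 < s2)
include hs2

lemma gaussPdf_pos (u : ℝ) : 0 < gaussPdf m s2 u := by
  rw [gaussPdf_eq_gaussianPDFReal hs2.le]
  exact gaussianPDFReal_pos _ _ _ (by simpa using hs2)

lemma integrable_gaussPdf : Integrable (gaussPdf m s2) := by
  rw [gaussPdf_eq_gaussianPDFReal hs2.le]
  exact integrable_gaussianPDFReal _ _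

lemma integral_gaussPdf : ∫ u, gaussPdf m s2 u = 1 := by
  rw [gaussPdf_eq_gaussianPDFReal hs2.le]
  exact integral_gaussianPDFReal_eq_one _ (by simpa using hs2)

lemma integral_mul_gaussPdf (f : ℝ → ℝ) :
    ∫ u, f u * gaussPdf m s2 u = ∫ u, f u ∂gaussianReal m s2.toNNReal := by
  rw [integral_gaussianReal_eq_integral_smul (by simpa using hs2),
    gaussPdf_eq_gaussianPDFReal hs2.le]
  simp_rw [smul_eq_mul, mul_comm]

lemma integrable_mul_gaussPdf_iff {f : ℝ → ℝ} :
    Integrable (fun u => f u * gaussPdf m s2 u) ↔ Integrable f (gaussianReal m s2.toNNReal) := by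
  rw [gaussianReal_of_var_ne_zero _ (by simpa using hs2),
    integrable_withDensity_iff_integrable_smul' (measurable_gaussianPDF _ _)
      (ae_of_all _ fun _ => gaussianPDF_lt_top), gaussPdf_eq_gaussianPDFReal hs2.le]
  simp_rw [toReal_gaussianPDF, smul_eq_mul, mul_comm]

lemma integrable_sq_sub_mul_gaussPdf (c : ℝ) :
    Integrable fun u => (u - c) ^ 2 * gaussPdf m s2 u := by
  rw [integrable_mul_gaussPdf_iff hs2]
  exact ((memLp_id_gaussianReal 2).sub (memLp_const c)).integrable_sq

lemma integral_sq_sub_mul_gaussPdf : ∫ u, (u - m) ^ 2 * gaussPdf m s2 u = s2 := by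
  rw [integral_mul_gaussPdf hs2]
  have := variance_fun_id_gaussianReal (μ := m) (v := s2.toNNReal)
  rw [variance_eq_integral measurable_id'.aemeasurable, integral_id_gaussianReal] at this
  rw [this, Real.coe_toNNReal _ hs2.le]

lemma log_gaussPdf (u : ℝ) :
    Real.log (gaussPdf m s2 u) = -(1 / 2) * Real.log (2 * π * s2) - (u - m) ^ 2 / (2 * s2) := by
  have hpos : (0 : ℝ) < 2 * π * s2 := by positivity
  rw [gaussPdf, Real.log_mul (by positivity) (exp_ne_zero _), Real.log_inv,
    Real.log_exp, Real.log_sqrt hpos.le]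
  ring

end Gaussian

lemma integral_quadratic_mul {α : Type*} [MeasurableSpace α] {ν : Measure α} {X g : α → ℝ}
    (hg : Integrable g ν) (hX : Integrable (fun ω => X ω * g ω) ν)
    (hX2 : Integrable (fun ω => X ω ^ 2 * g ω) ν) (c₂ c₁ c₀ : ℝ) :
    ∫ ω, (c₂ * X ω ^ 2 + c₁ * X ω + c₀) * g ω ∂ν =
      c₂ * (∫ ω, X ω ^ 2 * g ω ∂ν) + c₁ * (∫ ω, X ω * g ω ∂ν) + c₀ * ∫ ω, g ω ∂ν := by
  simp_rw [add_mul, mul_assoc]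
  rw [integral_add ?_ (hg.const_mul _), integral_add (hX2.const_mul _) (hX.const_mul _),
    integral_const_mul, integral_const_mul, integral_const_mul]
  exact (hX2.const_mul _).add (hX.const_mul _)

section CrossEntropy

variable {m s2 : ℝ} {p : ℝ → ℝ}

lemma mul_log_gaussPdf_eq (hs2 : 0 < s2) :
    (fun u => p u * Real.log (gaussPdf m s2 u)) =
      fun u => -(1 / 2) * Real.log (2 * π * s2) * p u - (2 * s2)⁻¹ * ((u - m) ^ 2 * p u) := by
  ext u
  rw [log_gaussPdf hs2]
  ring

lemma integrable_mul_log_gaussPdf (hs2 : 0 < s2) (hp : Integrable p)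
    (hp2 : Integrable fun u => (u - m) ^ 2 * p u) :
    Integrable fun u => p u * Real.log (gaussPdf m s2 u) := by
  rw [mul_log_gaussPdf_eq hs2]
  exact (hp.const_mul _).sub (hp2.const_mul _)

lemma integral_mul_log_gaussPdf (hs2 : 0 < s2) (hp : Integrable p)
    (hp2 : Integrable fun u => (u - m) ^ 2 * p u) (hp1 : ∫ u, p u = 1) :
    ∫ u, p u * Real.log (gaussPdf m s2 u) =
      -(1 / 2) * Real.log (2 * π * s2) - (2 * s2)⁻¹ * ∫ u, (u - m) ^ 2 * p u := by
  rw [mul_log_gaussPdf_eq hs2, integral_sub (hp.const_mul _) (hp2.const_mul _),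
    integral_const_mul, integral_const_mul, hp1, mul_one]

end CrossEntropy

lemma isAdmissibleDensity_gaussPdf {m s2 : ℝ} (hs2 : 0 < s2) :
    IsAdmissibleDensity (gaussPdf m s2) := by
  refine ⟨fun u => (gaussPdf_pos hs2 u).le, integral_gaussPdf hs2, ?_, ?_⟩
  · simpa using integrable_sq_sub_mul_gaussPdf (m := m) hs2 0
  · exact integrable_mul_log_gaussPdf hs2 (integrable_gaussPdf hs2)
      (integrable_sq_sub_mul_gaussPdf hs2 m)

namespace IsAdmissibleDensity

variable {p : ℝ → ℝ} (hp : IsAdmissibleDensity p)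
include hp

lemma integrable : Integrable p := by
  by_contra h
  exact one_ne_zero (hp.2.1.symm.trans (integral_undef h))

lemma integrable_id_mul : Integrable fun u => u * p u := by
  refine Integrable.mono' (hp.integrable.add hp.2.2.1)
    (aestronglyMeasurable_id.mul hp.integrable.aestronglyMeasurable) (ae_of_all _ fun u => ?_)
  have h1 : |u| ≤ 1 + u ^ 2 := by nlinarith [abs_nonneg u, sq_abs u]
  rw [Real.norm_eq_abs, abs_mul, abs_of_nonneg (hp.1 u), Pi.add_apply]
  nlinarith [mul_le_mul_of_nonneg_right h1 (hp.1 u)]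

lemma integral_quadratic_mul (c₂ c₁ c₀ : ℝ) :
    ∫ u, (c₂ * u ^ 2 + c₁ * u + c₀) * p u =
      c₂ * (∫ u, u ^ 2 * p u) + c₁ * (∫ u, u * p u) + c₀ := by
  rw [_root_.integral_quadratic_mul hp.integrable hp.integrable_id_mul hp.2.2.1, hp.2.1, mul_one]

lemma integrable_sq_sub_mul (m : ℝ) : Integrable fun u => (u - m) ^ 2 * p u := by
  have h := (hp.2.2.1.add (hp.integrable_id_mul.const_mul (-2 * m))).add
    (hp.integrable.const_mul (m ^ 2))
  refine h.congr (ae_of_all _ fun u => ?_)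
  simp only [Pi.add_apply]
  ring

lemma integral_sq_sub_mul (m : ℝ) :
    ∫ u, (u - m) ^ 2 * p u = (∫ u, u ^ 2 * p u) - 2 * m * (∫ u, u * p u) + m ^ 2 := by
  calc ∫ u, (u - m) ^ 2 * p u = ∫ u, (1 * u ^ 2 + -2 * m * u + m ^ 2) * p u := by
        congr 1; ext u; ring
    _ = _ := by rw [hp.integral_quadratic_mul]; ring

lemma integral_mul_log_gaussPdf_le {m s2 : ℝ} (hs2 : 0 < s2) :
    ∫ u, p u * Real.log (gaussPdf m s2 u) ≤ ∫ u, p u * Real.log (p u) := by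
  have pointwise : ∀ u, p u - gaussPdf m s2 u ≤
      p u * Real.log (p u) - p u * Real.log (gaussPdf m s2 u) := by
    intro u
    have hg := gaussPdf_pos (m := m) hs2 u
    rcases (hp.1 u).eq_or_lt with h | h
    · simp [← h, hg.le]
    · have hlog := Real.log_le_sub_one_of_pos (div_pos hg h)
      rw [Real.log_div hg.ne' h.ne'] at hlog
      have := mul_le_mul_of_nonneg_left hlog h.le
      rw [mul_sub, mul_sub, mul_div_cancel₀ _ h.ne', mul_one] at this
      linarith
  have hcross := integrable_mul_log_gaussPdf (m := m) hs2 hp.integrable (hp.integrable_sq_sub_mul m)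
  have hmono : ∫ u, (p u - gaussPdf m s2 u) ≤
      ∫ u, (p u * Real.log (p u) - p u * Real.log (gaussPdf m s2 u)) :=
    integral_mono (hp.integrable.sub (integrable_gaussPdf hs2)) (hp.2.2.2.sub hcross) pointwise
  rw [integral_sub hp.integrable (integrable_gaussPdf hs2), hp.2.1, integral_gaussPdf hs2,
    sub_self, integral_sub hp.2.2.2 hcross] at hmono
  linarith

end IsAdmissibleDensity

noncomputable def gibbsFunctional (β lam m : ℝ) (p : ℝ → ℝ) : ℝ :=
  β * (∫ u, (u - m) ^ 2 * p u) + lam * ∫ u, p u * Real.log (p u)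

section GibbsFunctional

variable {β lam m : ℝ} (hβ : 0 < β) (hlam : 0 < lam)
include hβ hlam

/-- The bracket is the relative entropy of `p` with respect to the Gaussian of variance
`λ / (2β)`. -/
lemma IsAdmissibleDensity.gibbsFunctional_eq {p : ℝ → ℝ} (hp : IsAdmissibleDensity p) :
    gibbsFunctional β lam m p = lam / 2 * Real.log (β / (π * lam)) +
      lam * ((∫ u, p u * Real.log (p u)) -
        ∫ u, p u * Real.log (gaussPdf m (lam / (2 * β)) u)) := by
  have hs2 : 0 < lam / (2 * β) := by positivity
  have hlog : Real.log (2 * π * (lam / (2 * β))) = -Real.log (β / (π * lam)) := by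
    rw [← Real.log_inv]
    congr 1
    field_simp
  rw [gibbsFunctional, integral_mul_log_gaussPdf hs2 hp.integrable (hp.integrable_sq_sub_mul m)
    hp.2.1, hlog]
  field_simp
  ring

lemma IsAdmissibleDensity.le_gibbsFunctional {p : ℝ → ℝ} (hp : IsAdmissibleDensity p) :
    lam / 2 * Real.log (β / (π * lam)) ≤ gibbsFunctional β lam m p := by
  rw [hp.gibbsFunctional_eq hβ hlam, le_add_iff_nonneg_right]
  exact mul_nonneg hlam.le (sub_nonneg.mpr (hp.integral_mul_log_gaussPdf_le (by positivity)))

lemma gibbsFunctional_gaussPdf :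
    gibbsFunctional β lam m (gaussPdf m (lam / (2 * β))) = lam / 2 * Real.log (β / (π * lam)) := by
  rw [(isAdmissibleDensity_gaussPdf (by positivity)).gibbsFunctional_eq hβ hlam, sub_self,
    mul_zero, add_zero]

end GibbsFunctional

section OneStep

variable {Ω : Type*} [MeasurableSpace Ω] {μ : Measure Ω} [IsProbabilityMeasure μ] {r : Ω → ℝ}
  {a σ rf lam α ρ c x : ℝ} {Jnext : ℝ → ℝ} {p : ℝ → ℝ}

/-- Average over the return `r` first, then complete the square in the action `u`. -/
lemma stepVal_eq_gibbsFunctional_add (hmeas : Measurable r) (hσ : σ ≠ 0)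
    (hra : ∫ ω, r ω ∂μ = a) (hrv : ∫ ω, r ω ^ 2 ∂μ = a ^ 2 + σ ^ 2)
    (hJ : ∀ y, Jnext y = α * (y - ρ) ^ 2 + c) (hp : IsAdmissibleDensity p) :
    stepVal μ r rf lam Jnext x p =
      gibbsFunctional (α * (a ^ 2 + σ ^ 2)) lam (-(a * (rf * x - ρ) / (a ^ 2 + σ ^ 2))) p +
        α * σ ^ 2 / (a ^ 2 + σ ^ 2) * (rf * x - ρ) ^ 2 + c := by
  have hs : a ^ 2 + σ ^ 2 ≠ 0 := by positivity
  have hr2 : Integrable (fun ω => r ω ^ 2) μ := by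
    by_contra h
    exact hs (hrv.symm.trans (integral_undef h))
  have hr1 : Integrable r μ :=
    ((memLp_two_iff_integrable_sq hmeas.aestronglyMeasurable).mpr hr2).integrable one_le_two
  set d := rf * x - ρ
  set S₁ := ∫ u, u * p u
  set S₂ := ∫ u, u ^ 2 * p u
  have inner : ∀ ω, ∫ u, Jnext (rf * x + r ω * u) * p u =
      α * S₂ * r ω ^ 2 + 2 * α * d * S₁ * r ω + (α * d ^ 2 + c) := by
    intro ω
    calc ∫ u, Jnext (rf * x + r ω * u) * p u
        = ∫ u, (α * r ω ^ 2 * u ^ 2 + 2 * α * r ω * d * u + (α * d ^ 2 + c)) * p u := by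
          congr 1; ext u; rw [hJ]; ring
      _ = _ := by rw [hp.integral_quadratic_mul]; ring
  have outer : ∫ ω, (∫ u, Jnext (rf * x + r ω * u) * p u) ∂μ =
      α * S₂ * (a ^ 2 + σ ^ 2) + 2 * α * d * S₁ * a + (α * d ^ 2 + c) := by
    calc ∫ ω, (∫ u, Jnext (rf * x + r ω * u) * p u) ∂μ
        = ∫ ω, (α * S₂ * r ω ^ 2 + 2 * α * d * S₁ * r ω + (α * d ^ 2 + c)) * 1 ∂μ := by
          simp_rw [inner, mul_one]
      _ = _ := by
          rw [integral_quadratic_mul (integrable_const 1) (by simpa using hr1)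
            (by simpa using hr2)]
          simp [hra, hrv]
  rw [stepVal, gibbsFunctional, outer, hp.integral_sq_sub_mul]
  field_simp
  ring

lemma stepVal_eq_of_forall_le (hmeas : Measurable r) (hσ : σ ≠ 0)
    (hra : ∫ ω, r ω ∂μ = a) (hrv : ∫ ω, r ω ^ 2 ∂μ = a ^ 2 + σ ^ 2)
    (hJ : ∀ y, Jnext y = α * (y - ρ) ^ 2 + c) (hα : 0 < α) (hlam : 0 < lam)
    (hp : IsAdmissibleDensity p)
    (hmin : ∀ q, IsAdmissibleDensity q →
      stepVal μ r rf lam Jnext x p ≤ stepVal μ r rf lam Jnext x q) :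
    stepVal μ r rf lam Jnext x p = α * σ ^ 2 / (a ^ 2 + σ ^ 2) * (rf * x - ρ) ^ 2 + c +
      lam / 2 * Real.log (α * (a ^ 2 + σ ^ 2) / (π * lam)) := by
  have hβ : 0 < α * (a ^ 2 + σ ^ 2) := by positivity
  set m := -(a * (rf * x - ρ) / (a ^ 2 + σ ^ 2))
  have hg := isAdmissibleDensity_gaussPdf (m := m) (div_pos hlam (mul_pos two_pos hβ))
  have upper := hmin _ hg
  have lower := hp.le_gibbsFunctional (m := m) hβ hlam
  rw [stepVal_eq_gibbsFunctional_add hmeas hσ hra hrv hJ hg, gibbsFunctional_gaussPdf hβ hlam]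
    at upper
  rw [stepVal_eq_gibbsFunctional_add hmeas hσ hra hrv hJ hp] at upper ⊢
  linarith

end OneStep

noncomputable def valueIterate (a σ rf lam w b B C A : ℝ) (T k t : ℕ) (x : ℝ) : ℝ :=
  A ^ (T - t - k) * (σ ^ 2 * rf ^ 2 / (a ^ 2 + σ ^ 2)) ^ k *
      (x - (rf⁻¹) ^ (T - t) * w) ^ 2 +
    lam / 2 * k * Real.log ((a ^ 2 + σ ^ 2) / (Real.pi * lam)) +
    lam / 2 * (∑ i ∈ Finset.range k,
      (i : ℝ) * Real.log (σ ^ 2 * rf ^ 2 / (a ^ 2 + σ ^ 2))) +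
    lam * Real.log A / 2 * k * ((T : ℝ) - t - k) +
    fPaper lam B C A a σ w b T (t + k)

section ValueIterate

variable {a σ rf lam w b B C A : ℝ} {T : ℕ}

lemma valueIterate_zero (t : ℕ) (x : ℝ) :
    valueIterate a σ rf lam w b B C A T 0 t x =
      A ^ (T - t) * (x - (rf⁻¹) ^ (T - t) * w) ^ 2 + fPaper lam B C A a σ w b T t := by
  simp [valueIterate]

lemma valueIterate_eq_sq_add (k t : ℕ) (x : ℝ) :
    valueIterate a σ rf lam w b B C A T k t x =
      A ^ (T - t - k) * (σ ^ 2 * rf ^ 2 / (a ^ 2 + σ ^ 2)) ^ k *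
          (x - (rf⁻¹) ^ (T - t) * w) ^ 2 +
        valueIterate a σ rf lam w b B C A T k t ((rf⁻¹) ^ (T - t) * w) := by
  simp only [valueIterate, sub_self]
  ring

lemma valueIterate_succ (hσ : σ ≠ 0) (hrf : rf ≠ 0) (hlam : lam ≠ 0) (hA : 0 < A) {k t : ℕ}
    (hk : k + 1 ≤ T - t) (x : ℝ) :
    valueIterate a σ rf lam w b B C A T (k + 1) t x =
      A ^ (T - (t + 1) - k) * (σ ^ 2 * rf ^ 2 / (a ^ 2 + σ ^ 2)) ^ k * σ ^ 2 /
          (a ^ 2 + σ ^ 2) * (rf * x - (rf⁻¹) ^ (T - (t + 1)) * w) ^ 2 +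
        valueIterate a σ rf lam w b B C A T k (t + 1) ((rf⁻¹) ^ (T - (t + 1)) * w) +
        lam / 2 * Real.log (A ^ (T - (t + 1) - k) * (σ ^ 2 * rf ^ 2 / (a ^ 2 + σ ^ 2)) ^ k *
          (a ^ 2 + σ ^ 2) / (π * lam)) := by
  obtain ⟨n, hn⟩ : ∃ n, T - t - (k + 1) = n := ⟨_, rfl⟩
  have hT : (T : ℝ) = t + 1 + k + n := by norm_cast; omega
  have hs : 0 < a ^ 2 + σ ^ 2 := by positivity
  have hπlam : π * lam ≠ 0 := mul_ne_zero pi_ne_zero hlam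
  have hlog :
      Real.log (A ^ n * (σ ^ 2 * rf ^ 2 / (a ^ 2 + σ ^ 2)) ^ k * (a ^ 2 + σ ^ 2) / (π * lam)) =
        n * Real.log A + k * Real.log (σ ^ 2 * rf ^ 2 / (a ^ 2 + σ ^ 2)) +
        Real.log ((a ^ 2 + σ ^ 2) / (π * lam)) := by
    rw [mul_div_assoc (A ^ n * _), Real.log_mul (by positivity) (div_ne_zero hs.ne' hπlam),
      Real.log_mul (by positivity) (by positivity), Real.log_pow, Real.log_pow]
  have hshift : rf * x - rf⁻¹ ^ (n + k) * w = rf * (x - rf⁻¹ ^ (n + k + 1) * w) := by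
    rw [pow_succ]
    field_simp
  simp only [valueIterate, sub_self]
  rw [hn, show T - (t + 1) - k = n by omega, show T - (t + 1) = n + k by omega,
    show T - t = n + k + 1 by omega, show t + 1 + k = t + (k + 1) by omega, hT, hlog, hshift,
    Finset.sum_range_succ]
  push_cast
  ring

end ValueIterate

theorem stmt13_general {Ω : Type*} [MeasurableSpace Ω] (μ : Measure Ω) [IsProbabilityMeasure μ]
    (r : Ω → ℝ) (hmeas : Measurable r)
    (a σ rf lam w b B C : ℝ)
    (hσ : 0 < σ) (hrf : 0 < rf) (hlam : 0 < lam)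
    (hra : ∫ ω, r ω ∂μ = a) (hrv : ∫ ω, (r ω) ^ 2 ∂μ = a ^ 2 + σ ^ 2)
    (T : ℕ)
    (A : ℝ)
    (hApos : 0 < A)
    (ps : ℕ → ℕ → ℝ → ℝ → ℝ) (Jf : ℕ → ℕ → ℝ → ℝ)
    -- its value function (paper's Theorem 2, first part)
    (hJ0 : ∀ t, t ≤ T → ∀ x, Jf 0 t x =
      A ^ (T - t) * (x - (rf⁻¹) ^ (T - t) * w) ^ 2 + fPaper lam B C A a σ w b T t)
    -- each improved policy minimizes the one-step functional of the previous value
    (hmin : ∀ k t x, t < T → IsAdmissibleDensity (ps (k + 1) t x) ∧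
      ∀ p : ℝ → ℝ, IsAdmissibleDensity p →
        stepVal μ r rf lam (Jf k (t + 1)) x (ps (k + 1) t x) ≤
          stepVal μ r rf lam (Jf k (t + 1)) x p)
    -- and the next value function is the value of the improved policy
    (hJrec : ∀ k t x, t < T → Jf (k + 1) t x =
      stepVal μ r rf lam (Jf k (t + 1)) x (ps (k + 1) t x)) :
    ∀ k t, t ≤ T → k ≤ T - t → ∀ x, Jf k t x =
      A ^ (T - t - k) * (σ ^ 2 * rf ^ 2 / (a ^ 2 + σ ^ 2)) ^ k *
          (x - (rf⁻¹) ^ (T - t) * w) ^ 2 +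
        lam / 2 * k * Real.log ((a ^ 2 + σ ^ 2) / (Real.pi * lam)) +
        lam / 2 * (∑ i ∈ Finset.range k,
          (i : ℝ) * Real.log (σ ^ 2 * rf ^ 2 / (a ^ 2 + σ ^ 2))) +
        lam * Real.log A / 2 * k * ((T : ℝ) - t - k) +
        fPaper lam B C A a σ w b T (t + k) := by
  suffices h : ∀ k t, t ≤ T → k ≤ T - t → ∀ x,
      Jf k t x = valueIterate a σ rf lam w b B C A T k t x from h
  intro k
  induction k with
  | zero => intro t ht _ x; rw [hJ0 t ht x, valueIterate_zero]
  | succ k ih =>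
    intro t _ hk x
    have htT : t < T := by omega
    have hJnext : ∀ y, Jf k (t + 1) y = _ := fun y =>
      (ih (t + 1) htT (by omega) y).trans (valueIterate_eq_sq_add k (t + 1) y)
    obtain ⟨hadm, hopt⟩ := hmin k t x htT
    rw [hJrec k t x htT, stepVal_eq_of_forall_le hmeas hσ.ne' hra hrv hJnext (by positivity) hlam
      hadm hopt, valueIterate_succ hσ.ne' hrf.ne' hlam.ne' hApos hk]

/-- Value function of the k-th iterate of policy improvement. -/
theorem stmt13 {Ω : Type*} [MeasurableSpace Ω] (μ : Measure Ω) [IsProbabilityMeasure μ]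
    (r : Ω → ℝ) (hmeas : Measurable r)
    (a σ rf lam w b K B C : ℝ)
    (hσ : 0 < σ) (hrf : 0 < rf) (hlam : 0 < lam) (hB : 0 < B) (hC : 0 < C)
    (hra : ∫ ω, r ω ∂μ = a) (hrv : ∫ ω, (r ω) ^ 2 ∂μ = a ^ 2 + σ ^ 2)
    (T : ℕ) (hT : 0 < T)
    (A : ℝ) (hA : A = rf ^ 2 + (a ^ 2 + σ ^ 2) * K ^ 2 + 2 * rf * a * K)
    (hApos : 0 < A) (hCA : C * A ≠ 1)
    (ps : ℕ → ℕ → ℝ → ℝ → ℝ) (Jf : ℕ → ℕ → ℝ → ℝ)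
    -- the initial policy is the given Gaussian policy
    (hp0 : ∀ t, t < T → ∀ x, ps 0 t x =
      gaussPdf (K * (x - (rf⁻¹) ^ (T - t) * w)) (lam * B * C ^ (T - t - 1)))
    -- its value function (paper's Theorem 2, first part)
    (hJ0 : ∀ t, t ≤ T → ∀ x, Jf 0 t x =
      A ^ (T - t) * (x - (rf⁻¹) ^ (T - t) * w) ^ 2 + fPaper lam B C A a σ w b T t)
    -- each improved policy minimizes the one-step functional of the previous value
    (hmin : ∀ k t x, t < T → IsAdmissibleDensity (ps (k + 1) t x) ∧
      ∀ p : ℝ → ℝ, IsAdmissibleDensity p →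
        stepVal μ r rf lam (Jf k (t + 1)) x (ps (k + 1) t x) ≤
          stepVal μ r rf lam (Jf k (t + 1)) x p)
    -- and the next value function is the value of the improved policy
    (hJrec : ∀ k t x, t < T → Jf (k + 1) t x =
      stepVal μ r rf lam (Jf k (t + 1)) x (ps (k + 1) t x)) :
    ∀ k t, t ≤ T → k ≤ T - t → ∀ x, Jf k t x =
      A ^ (T - t - k) * (σ ^ 2 * rf ^ 2 / (a ^ 2 + σ ^ 2)) ^ k *
          (x - (rf⁻¹) ^ (T - t) * w) ^ 2 +
        lam / 2 * k * Real.log ((a ^ 2 + σ ^ 2) / (Real.pi * lam)) +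
        lam / 2 * (∑ i ∈ Finset.range k,
          (i : ℝ) * Real.log (σ ^ 2 * rf ^ 2 / (a ^ 2 + σ ^ 2))) +
        lam * Real.log A / 2 * k * ((T : ℝ) - t - k) +
        fPaper lam B C A a σ w b T (t + k) :=
  stmt13_general μ r hmeas a σ rf lam w b B C hσ hrf hlam hra hrv T A hApos ps Jf hJ0 hmin hJrec
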